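/- In the 3-state line MDP with states s₀, s₁, s₂ where moving between adjacent states gives reward 1 (and all other transitions are self-loops with reward 0), the max-following policy over the two constituent policies 'always-right' and 'always-left' obtains cumulative reward H from any starting state, for any horizon H ≥ 2, while each constituent policy obtains cumulative reward at most 2 from any start state. -/
import Mathlib

def dval {S A : Type} (next : S → A → S) (R : S → A → ℝ)
    (H : ℕ) (π : ℕ → S → A) : ℕ → S → ℝ
  | h, s =>
    if h < H then R s (π h s) + dval next R H π (h + 1) (next s (π h s))
    else 0
termination_by h _ => H - h
decreasing_by omega

def lineNext : Fin 3 → Bool → Fin 3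
  | 0, true => 1
  | 1, true => 2
  | 2, true => 2
  | 0, false => 0
  | 1, false => 0
  | 2, false => 1

noncomputable def lineR (s : Fin 3) (a : Bool) : ℝ :=
  if lineNext s a = s then 0 else 1

def lineC : Fin 2 → ℕ → Fin 3 → Bool := fun k _ _ => k = 0

lemma fin2_cases' (k : Fin 2) : k = 0 ∨ k = 1 := by
  rcases k with ⟨v, hv⟩
  interval_cases v
  · exact Or.inl rfl
  · exact Or.inr rfl

lemma fin3_cases' (s : Fin 3) : s = 0 ∨ s = 1 ∨ s = 2 := by
  rcases s with ⟨v, hv⟩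
  interval_cases v
  · exact Or.inl rfl
  · exact Or.inr (Or.inl rfl)
  · exact Or.inr (Or.inr rfl)

lemma dval_of_ge {S A : Type} (next : S → A → S) (R : S → A → ℝ) (H : ℕ)
    (π : ℕ → S → A) (h : ℕ) (s : S) (hh : H ≤ h) :
    dval next R H π h s = 0 := by
  rw [dval, if_neg (by omega)]

lemma dval_of_lt {S A : Type} (next : S → A → S) (R : S → A → ℝ) (H : ℕ)
    (π : ℕ → S → A) (h : ℕ) (s : S) (hh : h < H) :
    dval next R H π h s = R s (π h s) + dval next R H π (h + 1) (next s (π h s)) := by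
  rw [dval, if_pos hh]

/-- Downward induction from horizon `H`. -/
lemma down_ind (H : ℕ) (P : ℕ → Prop) (h0 : ∀ h, H ≤ h → P h)
    (hs : ∀ h, h < H → P (h + 1) → P h) : ∀ h, P h := by
  have key : ∀ n h, H - h ≤ n → P h := by
    intro n
    induction n with
    | zero => intro h hn; exact h0 h (by omega)
    | succ n ih =>
      intro h hn
      by_cases hlt : h < H
      · exact hs h hlt (ih (h + 1) (by omega))
      · exact h0 h (by omega)
  intro h; exact key (H - h) h le_rfl

lemma lineR_nonneg (s : Fin 3) (a : Bool) : 0 ≤ lineR s a := by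
  unfold lineR; split <;> norm_num

lemma dval_nonneg (H : ℕ) (π : ℕ → Fin 3 → Bool) :
    ∀ h, ∀ s, 0 ≤ dval lineNext lineR H π h s := by
  refine down_ind H (fun h => ∀ s, 0 ≤ dval lineNext lineR H π h s) ?_ ?_
  · intro h hh s; rw [dval_of_ge _ _ _ _ _ _ hh]
  · intro h hh ih s
    rw [dval_of_lt _ _ _ _ _ _ hh]
    exact add_nonneg (lineR_nonneg _ _) (ih _)

lemma right_s2 (H : ℕ) : ∀ h, dval lineNext lineR H (lineC 0) h 2 = 0 := by
  refine down_ind H _ (fun h hh => dval_of_ge _ _ _ _ _ _ hh) ?_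
  intro h hh ih
  rw [dval_of_lt _ _ _ _ _ _ hh]
  have hc : lineC 0 h 2 = true := rfl
  rw [hc]
  have h1 : lineNext 2 true = 2 := rfl
  rw [h1, ih]
  unfold lineR; rw [if_pos (by decide)]; ring

lemma left_s0 (H : ℕ) : ∀ h, dval lineNext lineR H (lineC 1) h 0 = 0 := by
  refine down_ind H _ (fun h hh => dval_of_ge _ _ _ _ _ _ hh) ?_
  intro h hh ih
  rw [dval_of_lt _ _ _ _ _ _ hh]
  have hc : lineC 1 h 0 = false := rfl
  rw [hc]
  have h1 : lineNext 0 false = 0 := rfl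
  rw [h1, ih]
  unfold lineR; rw [if_pos (by decide)]; ring

lemma right_s1 (H : ℕ) (h : ℕ) : dval lineNext lineR H (lineC 0) h 1 ≤ 1 := by
  by_cases hh : h < H
  · rw [dval_of_lt _ _ _ _ _ _ hh]
    have hc : lineC 0 h 1 = true := rfl
    rw [hc]
    have h1 : lineNext 1 true = 2 := rfl
    rw [h1, right_s2]
    unfold lineR; rw [if_neg (by decide)]; norm_num
  · rw [dval_of_ge _ _ _ _ _ _ (by omega)]; norm_num

lemma left_s1 (H : ℕ) (h : ℕ) : dval lineNext lineR H (lineC 1) h 1 ≤ 1 := by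
  by_cases hh : h < H
  · rw [dval_of_lt _ _ _ _ _ _ hh]
    have hc : lineC 1 h 1 = false := rfl
    rw [hc]
    have h1 : lineNext 1 false = 0 := rfl
    rw [h1, left_s0]
    unfold lineR; rw [if_neg (by decide)]; norm_num
  · rw [dval_of_ge _ _ _ _ _ _ (by omega)]; norm_num

lemma right_s0_le (H : ℕ) (h : ℕ) : dval lineNext lineR H (lineC 0) h 0 ≤ 2 := by
  by_cases hh : h < H
  · rw [dval_of_lt _ _ _ _ _ _ hh]
    have hc : lineC 0 h 0 = true := rfl
    rw [hc]
    have h1 : lineNext 0 true = 1 := rfl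
    rw [h1]
    have h2 := right_s1 H (h + 1)
    have hr : lineR 0 true ≤ 1 := by unfold lineR; split <;> norm_num
    linarith
  · rw [dval_of_ge _ _ _ _ _ _ (by omega)]; norm_num

lemma left_s2_le (H : ℕ) (h : ℕ) : dval lineNext lineR H (lineC 1) h 2 ≤ 2 := by
  by_cases hh : h < H
  · rw [dval_of_lt _ _ _ _ _ _ hh]
    have hc : lineC 1 h 2 = false := rfl
    rw [hc]
    have h1 : lineNext 2 false = 1 := rfl
    rw [h1]
    have h2 := left_s1 H (h + 1)
    have hr : lineR 2 false ≤ 1 := by unfold lineR; split <;> norm_num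
    linarith
  · rw [dval_of_ge _ _ _ _ _ _ (by omega)]; norm_num

lemma right_s0_ge (H : ℕ) (h : ℕ) (hh : h < H) :
    1 ≤ dval lineNext lineR H (lineC 0) h 0 := by
  rw [dval_of_lt _ _ _ _ _ _ hh]
  have hc : lineC 0 h 0 = true := rfl
  rw [hc]
  have h1 : lineNext 0 true = 1 := rfl
  rw [h1]
  have h2 := dval_nonneg H (lineC 0) (h + 1) 1
  have hr : lineR 0 true = 1 := by unfold lineR; rw [if_neg (by decide)]
  linarith

lemma left_s2_ge (H : ℕ) (h : ℕ) (hh : h < H) :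
    1 ≤ dval lineNext lineR H (lineC 1) h 2 := by
  rw [dval_of_lt _ _ _ _ _ _ hh]
  have hc : lineC 1 h 2 = false := rfl
  rw [hc]
  have h1 : lineNext 2 false = 1 := rfl
  rw [h1]
  have h2 := dval_nonneg H (lineC 1) (h + 1) 1
  have hr : lineR 2 false = 1 := by unfold lineR; rw [if_neg (by decide)]
  linarith

/-- in the 3-state line MDP with horizon `H ≥ 2`, every max-following
policy over the constituents always-right and always-left obtains cumulative reward
`H` from every starting state, while each constituent obtains at most `2`. -/
theorem line_max_following (H : ℕ) (hH : 2 ≤ H) :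
    (∀ π : ℕ → Fin 3 → Bool,
      (∀ h, h < H → ∀ s, ∃ k : Fin 2, π h s = lineC k h s ∧
        ∀ k' : Fin 2, dval lineNext lineR H (lineC k') h s ≤
          dval lineNext lineR H (lineC k) h s) →
      ∀ s, dval lineNext lineR H π 0 s = H) ∧
    (∀ k : Fin 2, ∀ s, dval lineNext lineR H (lineC k) 0 s ≤ 2) := by
  constructor
  · intro π hmax
    have hπ0 : ∀ h, h < H → π h 0 = true := by
      intro h hh
      obtain ⟨k, hk, hmaxk⟩ := hmax h hh 0
      rcases fin2_cases' k with rfl | rfl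
      · rw [hk]; rfl
      · exfalso
        have h1 := hmaxk 0
        have h2 := right_s0_ge H h hh
        have h3 := left_s0 H h
        rw [h3] at h1
        linarith
    have hπ2 : ∀ h, h < H → π h 2 = false := by
      intro h hh
      obtain ⟨k, hk, hmaxk⟩ := hmax h hh 2
      rcases fin2_cases' k with rfl | rfl
      · exfalso
        have h1 := hmaxk 1
        have h2 := left_s2_ge H h hh
        have h3 := right_s2 H h
        rw [h3] at h1
        linarith
      · rw [hk]; rfl
    have key : ∀ n, ∀ h, h + n = H → ∀ s, dval lineNext lineR H π h s = n := by
      intro n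
      induction n with
      | zero =>
        intro h hh s
        rw [dval_of_ge _ _ _ _ _ _ (by omega)]; norm_num
      | succ n ih =>
        intro h hh s
        have hhlt : h < H := by omega
        rw [dval_of_lt _ _ _ _ _ _ hhlt]
        rcases fin3_cases' s with rfl | rfl | rfl
        · rw [hπ0 h hhlt]
          have h1 : lineNext 0 true = 1 := rfl
          have h2 : lineR 0 true = 1 := by unfold lineR; rw [if_neg (by decide)]
          rw [h1, h2, ih (h + 1) (by omega)]
          push_cast; ring
        · cases hb : π h 1
          · have h1 : lineNext 1 false = 0 := rfl
            have h2 : lineR 1 false = 1 := by unfold lineR; rw [if_neg (by decide)]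
            rw [h1, h2, ih (h + 1) (by omega)]
            push_cast; ring
          · have h1 : lineNext 1 true = 2 := rfl
            have h2 : lineR 1 true = 1 := by unfold lineR; rw [if_neg (by decide)]
            rw [h1, h2, ih (h + 1) (by omega)]
            push_cast; ring
        · rw [hπ2 h hhlt]
          have h1 : lineNext 2 false = 1 := rfl
          have h2 : lineR 2 false = 1 := by unfold lineR; rw [if_neg (by decide)]
          rw [h1, h2, ih (h + 1) (by omega)]
          push_cast; ring
    intro s
    exact key H 0 (by omega) s
  · intro k s
    rcases fin2_cases' k with rfl | rfl <;> rcases fin3_cases' s with rfl | rfl | rfl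
    · exact right_s0_le H 0
    · exact (right_s1 H 0).trans (by norm_num)
    · rw [right_s2]; norm_num
    · rw [left_s0]; norm_num
    · exact (left_s1 H 0).trans (by norm_num)
    · exact left_s2_le H 0
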